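/- arXiv:2211.12785 — 2 statements merged into one kernel-verified Lean document; each statement's English description precedes it below -/
import Mathlib

section
/- The sequence of optimal partial values F*_r defined by F*_0 = -gamma and F*_r = min_{l=1,...,r} ( E_{l:r} + gamma + F*_{l-1} ), where E_{l:r} >= 0 and E_{l:r} = 0 whenever r - l <= 1, is non-decreasing for r >= 1 and satisfies 0 <= F*_r <= gamma * (ceil(r/2) - 1) for all r >= 1 (interpreting the bound as 0 for r <= 2). -/
/-- **Monotonicity and bounds for the partial optimal values.**
The sequence `F*_r` defined by `F*_0 = -γ` and
`F*_r = min_{l=1,…,r}(E l r + γ + F*_{l-1})`, where `E l r ≥ 0`,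
`E l r = 0` for `r - l ≤ 1`, and `E` is monotone (non-increasing in `l`,
non-decreasing in `r`), is non-decreasing for `r ≥ 1` and satisfies
`0 ≤ F*_r ≤ γ (⌈r/2⌉ - 1)` for all `r ≥ 1` (the bound being `0` for
`r ≤ 2`). -/
theorem bellman_values_monotone_and_bounded
    (γ : ℝ) (hγ : 0 < γ) (N : ℕ)
    (E : ℕ → ℕ → ℝ) (hE0 : ∀ l r, 0 ≤ E l r)
    (hE1 : ∀ l r, r ≤ l + 1 → E l r = 0)
    (hEl : ∀ l l' r, l ≤ l' → E l' r ≤ E l r)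
    (hEr : ∀ l r r', r ≤ r' → E l r ≤ E l r')
    (Fstar : ℕ → ℝ) (hF0 : Fstar 0 = -γ)
    (hFrec : ∀ r, (hr : 1 ≤ r) →
      Fstar r = (Finset.Icc 1 r).inf' (Finset.nonempty_Icc.mpr hr)
        (fun l => E l r + γ + Fstar (l - 1))) :
    (∀ r, 1 ≤ r → Fstar r ≤ Fstar (r + 1)) ∧
      ∀ r, 1 ≤ r →
        0 ≤ Fstar r ∧ Fstar r ≤ γ * (((r + 1) / 2 - 1 : ℕ) : ℝ) := by
  -- Nonnegativity by strong induction
  have hnn : ∀ r, 1 ≤ r → 0 ≤ Fstar r := by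
    intro r
    induction r using Nat.strong_induction_on with
    | _ r ih =>
      intro hr
      rw [hFrec r hr]
      apply Finset.le_inf'
      intro l hl
      simp only [Finset.mem_Icc] at hl
      rcases Nat.eq_or_lt_of_le hl.1 with h1 | h2
      · have : l - 1 = 0 := by omega
        rw [this, hF0]
        have := hE0 l r
        linarith
      · have hl1 : 1 ≤ l - 1 := by omega
        have hlt : l - 1 < r := by omega
        have := ih (l - 1) hlt hl1
        have := hE0 l r
        linarith
  -- Monotonicity
  have hmono : ∀ r, 1 ≤ r → Fstar r ≤ Fstar (r + 1) := by
    intro r hr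
    rw [hFrec (r + 1) (by omega)]
    apply Finset.le_inf'
    intro l hl
    simp only [Finset.mem_Icc] at hl
    rcases Nat.lt_or_ge l (r + 1) with h | h
    · have hlr : l ≤ r := by omega
      have h1 : Fstar r ≤ E l r + γ + Fstar (l - 1) := by
        rw [hFrec r hr]
        exact Finset.inf'_le _ (Finset.mem_Icc.mpr ⟨hl.1, hlr⟩)
      have h2 : E l r ≤ E l (r + 1) := hEr l r (r + 1) (by omega)
      linarith
    · have : l = r + 1 := by omega
      subst this
      have h2 : (r + 1) - 1 = r := by omega
      rw [h2]
      have := hE0 (r + 1) (r + 1)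
      linarith
  -- Upper bound by strong induction
  have hub : ∀ r, 1 ≤ r → Fstar r ≤ γ * (((r + 1) / 2 - 1 : ℕ) : ℝ) := by
    intro r
    induction r using Nat.strong_induction_on with
    | _ r ih =>
      intro hr
      rcases Nat.lt_or_ge r 3 with h3 | h3
      · -- r = 1 or 2 : bound is 0, use l = 1
        have hb : ((r + 1) / 2 - 1 : ℕ) = 0 := by omega
        rw [hb]
        have h1 : Fstar r ≤ E 1 r + γ + Fstar (1 - 1) := by
          rw [hFrec r hr]
          exact Finset.inf'_le _ (Finset.mem_Icc.mpr ⟨le_refl 1, hr⟩)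
        have hE : E 1 r = 0 := hE1 1 r (by omega)
        simp only [Nat.sub_self] at h1
        rw [hE, hF0] at h1
        simpa using h1.trans_eq (by ring)
      · -- r ≥ 3 : use l = r - 1
        have h1 : Fstar r ≤ E (r - 1) r + γ + Fstar (r - 1 - 1) := by
          rw [hFrec r hr]
          exact Finset.inf'_le _ (Finset.mem_Icc.mpr ⟨by omega, by omega⟩)
        have hE : E (r - 1) r = 0 := hE1 (r - 1) r (by omega)
        have h2 : r - 1 - 1 = r - 2 := by omega
        rw [hE, h2] at h1
        have hih := ih (r - 2) (by omega) (by omega)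
        have hcast : ((r - 2 + 1) / 2 - 1 : ℕ) + 1 = ((r + 1) / 2 - 1 : ℕ) := by
          omega
        have : (((r - 2 + 1) / 2 - 1 : ℕ) : ℝ) + 1 = (((r + 1) / 2 - 1 : ℕ) : ℝ) := by
          rw [← hcast]; push_cast; ring
        nlinarith [h1, hih]
  exact ⟨hmono, fun r hr => ⟨hnn r hr, hub r hr⟩⟩
end

section
/- Pruning correctness: Fix r and define F*_{r,r} = E_{1:r} and, for l = r-1, r-2, ..., 2, F*_{l,r} = min( F*_{l+1,r}, E_{l:r} + gamma + F*_{l-1} ). Suppose F*_l >= 0 for all l and E_{l:r} is non-increasing in l (i.e., E_{l':r} >= E_{l:r} when l' <= l). If at some index l the condition E_{l:r} + gamma >= F*_{l,r} holds, then F*_{l',r} >= F*_{l,r} for all l' <= l, and hence F*_{2,r} = F*_{l,r}; i.e., the loop may be terminated early without changing the computed minimum. -/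
/-- **Correctness of the pruning strategy.**
Fix `r ≥ 2` and define `G r = E 1` (`= E_{1:r}`) and, downward for
`l = r-1, …, 2`, `G l = min (G (l+1)) (E l + γ + F*_{l-1})`, where
`E l = E_{l:r} ≥ 0` is non-increasing in `l` (so `E l ≤ E l'` for `l' ≤ l`)
and `F*_l ≥ 0` for `l ≥ 1`. If at some index `l` the pruning condition
`E l + γ ≥ G l` holds, then `G l ≤ G l'` for all `2 ≤ l' ≤ l`, and hence
`G 2 = G l`: the loop may be terminated early. -/
theorem pruning_correctness
    (γ : ℝ) (hγ : 0 < γ) (r : ℕ) (hr : 2 ≤ r)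
    (E : ℕ → ℝ) (hE0 : ∀ l, 0 ≤ E l)
    (hEmono : ∀ l l', l' ≤ l → E l ≤ E l')
    (Fstar : ℕ → ℝ) (hFstar : ∀ l, 1 ≤ l → 0 ≤ Fstar l)
    (G : ℕ → ℝ) (hGr : G r = E 1)
    (hGrec : ∀ l, 2 ≤ l → l ≤ r - 1 →
      G l = min (G (l + 1)) (E l + γ + Fstar (l - 1)))
    (l : ℕ) (hl2 : 2 ≤ l) (hlr : l ≤ r)
    (hprune : G l ≤ E l + γ) :
    (∀ l', 2 ≤ l' → l' ≤ l → G l ≤ G l') ∧ G 2 = G l := by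
  have key : ∀ k l', l' + k = l → 2 ≤ l' → G l ≤ G l' := by
    intro k
    induction k with
    | zero =>
      intro l' h _
      have : l' = l := by omega
      simp [this]
    | succ n ih =>
      intro l' h h2
      have hlr1 : l' ≤ r - 1 := by omega
      rw [hGrec l' h2 hlr1]
      refine le_min (ih (l' + 1) (by omega) (by omega)) ?_
      have hE : E l ≤ E l' := hEmono l l' (by omega)
      have hF : 0 ≤ Fstar (l' - 1) := hFstar _ (by omega)
      linarith
  have key' : ∀ l', 2 ≤ l' → l' ≤ l → G l ≤ G l' := fun l' h2 hle =>
    key (l - l') l' (by omega) h2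
  refine ⟨key', le_antisymm ?_ (key' 2 le_rfl hl2)⟩
  have mono : ∀ m, 2 ≤ m → m ≤ l → G 2 ≤ G m := by
    intro m h2
    induction m, h2 using Nat.le_induction with
    | base => intro _; exact le_rfl
    | succ n hn ih =>
      intro hml
      have hs : G n ≤ G (n + 1) := by
        rw [hGrec n hn (by omega)]
        exact min_le_left _ _
      exact le_trans (ih (by omega)) hs
  exact mono l hl2 le_rfl
end
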